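/- The union over 0 ≤ r ≤ t ≤ 1 and 0 ≤ s ≤ 1 of the sets {(R₀,R₁) ∈ ℝ≥0² : R₀ ≤ min(r/6 + s/2, t), R₀ + R₁ ≤ min(r/6 + s/2 + (1−r)/2 + 1−s, t + (1−t)/2 + 1−s)} equals the convex polygon with vertices (0,0), (2/3,0), (1/2,1/2), (0,3/2). -/

import Mathlib

/-!
Both sets equal the polygon `x, y ≥ 0`, `3x + y ≤ 2`, `2x + y ≤ 3/2`.
For `CapRegion` the two inequalities follow by eliminating `r` and `s` from `R₀ ≤ r/6 + s/2` and
the first sum-rate bound. Conversely a point with `x ≤ 1/2` is reached with `(r, s, t) = (0, 2x, 1)`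
and one with `x > 1/2` with `(r, s, t) = (6x - 3, 1, 1)`. For the hull, the diagonal from `(0,0)`
to `(1/2,1/2)` cuts the polygon into two triangles, in each of which the barycentric weights of a
point are affine in its coordinates.
-/

/-- The capacity region of the erasure example. -/
def CapRegion : Set (ℝ × ℝ) :=
  {R | ∃ r s t : ℝ, 0 ≤ r ∧ r ≤ t ∧ t ≤ 1 ∧ 0 ≤ s ∧ s ≤ 1 ∧
    0 ≤ R.1 ∧ 0 ≤ R.2 ∧ R.1 ≤ min (r/6 + s/2) t ∧
    R.1 + R.2 ≤ min (r/6 + s/2 + (1-r)/2 + (1-s)) (t + (1-t)/2 + (1-s))}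

theorem Convex.add_four_smul_mem {𝕜 E : Type*} [Field 𝕜] [LinearOrder 𝕜] [IsStrictOrderedRing 𝕜]
    [AddCommGroup E] [Module 𝕜 E] {s : Set E} (hs : Convex 𝕜 s) {a b c d : E}
    (ha : a ∈ s) (hb : b ∈ s) (hc : c ∈ s) (hd : d ∈ s) {wa wb wc wd : 𝕜}
    (hwa : 0 ≤ wa) (hwb : 0 ≤ wb) (hwc : 0 ≤ wc) (hwd : 0 ≤ wd) (hw : wa + wb + wc + wd = 1) :
    wa • a + wb • b + wc • c + wd • d ∈ s := by
  have := hs.sum_mem (t := Finset.univ) (w := ![wa, wb, wc, wd]) (z := ![a, b, c, d])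
    (by intro i _; fin_cases i <;> assumption) (by simpa [Fin.sum_univ_four] using hw)
    (by intro i _; fin_cases i <;> assumption)
  simpa [Fin.sum_univ_four, add_assoc] using this

def erasurePolygon : Set (ℝ × ℝ) :=
  {p | 0 ≤ p.1 ∧ 0 ≤ p.2 ∧ 3 * p.1 + p.2 ≤ 2 ∧ 2 * p.1 + p.2 ≤ 3 / 2}

def erasureVertices : Set (ℝ × ℝ) :=
  {((0:ℝ),(0:ℝ)), ((2/3:ℝ),(0:ℝ)), ((1/2:ℝ),(1/2:ℝ)), ((0:ℝ),(3/2:ℝ))}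

theorem capRegion_subset_erasurePolygon : CapRegion ⊆ erasurePolygon := by
  rintro ⟨x, y⟩ ⟨r, s, t, hr, -, -, -, hs, hx, hy, hx_le, hsum_le⟩
  have hx_le' : x ≤ r / 6 + s / 2 := hx_le.trans (min_le_left _ _)
  have hsum_le' : x + y ≤ r / 6 + s / 2 + (1 - r) / 2 + (1 - s) :=
    hsum_le.trans (min_le_left _ _)
  exact ⟨hx, hy, by linarith, by linarith⟩

theorem erasurePolygon_subset_capRegion : erasurePolygon ⊆ CapRegion := by
  rintro ⟨x, y⟩ ⟨hx, hy, h₁, h₂⟩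
  dsimp only at hx hy h₁ h₂ ⊢
  rcases le_or_gt x (1 / 2) with hx_half | hx_half
  · refine ⟨0, 2 * x, 1, le_rfl, zero_le_one, le_rfl, by linarith, by linarith, hx, hy, ?_, ?_⟩ <;>
      exact le_min (by linarith) (by linarith)
  · refine ⟨6 * x - 3, 1, 1, by linarith, by linarith, le_rfl, zero_le_one, le_rfl, hx, hy,
      ?_, ?_⟩ <;> exact le_min (by linarith) (by linarith)

theorem convex_erasurePolygon : Convex ℝ erasurePolygon := by
  rintro ⟨a₁, a₂⟩ ⟨ha₁, ha₂, ha₃, ha₄⟩ ⟨b₁, b₂⟩ ⟨hb₁, hb₂, hb₃, hb₄⟩ u v hu hv huv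
  simp only [Prod.smul_mk, Prod.mk_add_mk, smul_eq_mul] at *
  refine ⟨by positivity, by positivity, ?_, ?_⟩ <;>
    nlinarith [mul_le_mul_of_nonneg_left ha₃ hu, mul_le_mul_of_nonneg_left hb₃ hv,
      mul_le_mul_of_nonneg_left ha₄ hu, mul_le_mul_of_nonneg_left hb₄ hv]

theorem convexHull_erasureVertices_subset : convexHull ℝ erasureVertices ⊆ erasurePolygon := by
  refine convexHull_min ?_ convex_erasurePolygon
  simp only [erasureVertices, Set.insert_subset_iff, Set.singleton_subset_iff]
  norm_num [erasurePolygon]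

theorem mem_convexHull_erasureVertices {wb wc wd : ℝ} (hwb : 0 ≤ wb) (hwc : 0 ≤ wc) (hwd : 0 ≤ wd)
    (hw : wb + wc + wd ≤ 1) :
    (2 / 3 * wb + 1 / 2 * wc, 1 / 2 * wc + 3 / 2 * wd) ∈ convexHull ℝ erasureVertices := by
  have hvert : ∀ p ∈ erasureVertices, p ∈ convexHull ℝ erasureVertices :=
    fun p hp ↦ subset_convexHull ℝ _ hp
  have := (convex_convexHull ℝ erasureVertices).add_four_smul_mem
    (hvert (0, 0) (by simp [erasureVertices]))
    (hvert (2 / 3, 0) (by simp [erasureVertices]))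
    (hvert (1 / 2, 1 / 2) (by simp [erasureVertices]))
    (hvert (0, 3 / 2) (by simp [erasureVertices]))
    (sub_nonneg.2 hw) hwb hwc hwd (by ring)
  simpa [Prod.smul_mk, mul_comm] using this

theorem erasurePolygon_subset_convexHull : erasurePolygon ⊆ convexHull ℝ erasureVertices := by
  rintro ⟨x, y⟩ ⟨hx, hy, h₁, h₂⟩
  dsimp only at hx hy h₁ h₂
  rcases le_or_gt y x with hyx | hxy
  · convert mem_convexHull_erasureVertices (wb := 3 * (x - y) / 2) (wc := 2 * y) (wd := 0)
      (by linarith) (by linarith) le_rfl (by linarith)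
      using 2 <;> ring
  · convert mem_convexHull_erasureVertices (wb := 0) (wc := 2 * x) (wd := 2 * (y - x) / 3)
      le_rfl (by linarith) (by linarith) (by linarith)
      using 2 <;> ring

/-- The capacity region of the erasure example equals the convex polygon with
vertices `(0,0)`, `(2/3,0)`, `(1/2,1/2)`, `(0,3/2)`. -/
theorem cap_region_eq_polygon :
    CapRegion =
      convexHull ℝ ({((0:ℝ),(0:ℝ)), ((2/3:ℝ),(0:ℝ)), ((1/2:ℝ),(1/2:ℝ)),
          ((0:ℝ),(3/2:ℝ))} : Set (ℝ × ℝ)) :=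
  (capRegion_subset_erasurePolygon.antisymm erasurePolygon_subset_capRegion).trans
    (erasurePolygon_subset_convexHull.antisymm convexHull_erasureVertices_subset)
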